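/- Let E be a set and Z : E⁴ → ℝ. With NCycle_n as the cyclic sum of Z over length-4 cyclic factors, for all a,b,c,d ∈ E: NCycle_4(a,b,c,d) = NCycle_5(a,b,c,d,a) + NCycle_5(a,b,c,c,d) − NCycle_6(a,b,c,c,d,a). Hence if NCycle_5 ≡ 0 and NCycle_6 ≡ 0 then NCycle_4 ≡ 0. -/

import Mathlib

/-- Cyclic sum of `Z` over length-4 cyclic factors of a word of length `n`. -/
def ncyc {E : Type*} (Z : E → E → E → E → ℝ) (n : ℕ) (x : ℕ → E) : ℝ :=
  ∑ j ∈ Finset.range n,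
    Z (x (j % n)) (x ((j+1) % n)) (x ((j+2) % n)) (x ((j+3) % n))

open Fin.NatCast in
/-- View a finite tuple as a periodic word indexed by `ℕ`. -/
def ofT {E : Type*} {n : ℕ} [NeZero n] (v : Fin n → E) : ℕ → E :=
  fun j => v (j : Fin n)

/-!
The six cyclic factors `abcc, bccd, ccda, cdaa, daab, aabc` of the cycle `abccda` are
exactly the cyclic factors of `abcda` and `abccd` other than `abcd, bcda, cdab, dabc`,
which are the cyclic factors of `abcd`. An arbitrary word has the same `NCycle_4` as the
4-cycle of its first four letters, which gives the vanishing statement.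
-/

section

variable {E : Type*} (Z : E → E → E → E → ℝ)

theorem ncyc_congr {n : ℕ} {x y : ℕ → E} (h : ∀ i < n, x i = y i) :
    ncyc Z n x = ncyc Z n y :=
  Finset.sum_congr rfl fun j hj => by
    simp only [h _ (Nat.mod_lt _ (Nat.zero_lt_of_lt (Finset.mem_range.mp hj)))]

theorem ncyc_four (x : ℕ → E) :
    ncyc Z 4 x = Z (x 0) (x 1) (x 2) (x 3) + Z (x 1) (x 2) (x 3) (x 0)
      + Z (x 2) (x 3) (x 0) (x 1) + Z (x 3) (x 0) (x 1) (x 2) := by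
  simp [ncyc, Finset.sum_range_succ]

theorem ncyc_five (x : ℕ → E) :
    ncyc Z 5 x = Z (x 0) (x 1) (x 2) (x 3) + Z (x 1) (x 2) (x 3) (x 4)
      + Z (x 2) (x 3) (x 4) (x 0) + Z (x 3) (x 4) (x 0) (x 1)
      + Z (x 4) (x 0) (x 1) (x 2) := by
  simp [ncyc, Finset.sum_range_succ]

theorem ncyc_six (x : ℕ → E) :
    ncyc Z 6 x = Z (x 0) (x 1) (x 2) (x 3) + Z (x 1) (x 2) (x 3) (x 4)
      + Z (x 2) (x 3) (x 4) (x 5) + Z (x 3) (x 4) (x 5) (x 0)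
      + Z (x 4) (x 5) (x 0) (x 1) + Z (x 5) (x 0) (x 1) (x 2) := by
  simp [ncyc, Finset.sum_range_succ]

theorem ncyc_four_eq_ncyc_five_add_ncyc_five_sub_ncyc_six (a b c d : E) :
    ncyc Z 4 (ofT ![a, b, c, d])
      = ncyc Z 5 (ofT ![a, b, c, d, a]) + ncyc Z 5 (ofT ![a, b, c, c, d])
        - ncyc Z 6 (ofT ![a, b, c, c, d, a]) := by
  rw [ncyc_four, ncyc_five, ncyc_five, ncyc_six]
  simp only [ofT, Nat.succ_eq_add_one, Nat.reduceAdd, Nat.ofNat_pos, Fin.natCast_eq_mk,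
    Fin.zero_eta, Fin.isValue, Matrix.cons_val_zero, Nat.one_lt_ofNat, Fin.mk_one,
    Matrix.cons_val_one, Nat.cast_ofNat, Matrix.cons_val]
  ring

theorem ncyc_four_eq_ncyc_four_ofT (x : ℕ → E) :
    ncyc Z 4 x = ncyc Z 4 (ofT ![x 0, x 1, x 2, x 3]) :=
  ncyc_congr Z fun i hi => by
    interval_cases i <;> rfl

end

/-- `NCycle_4` as a combination of `NCycle_5` and `NCycle_6`; hence if
`NCycle_5 ≡ 0` and `NCycle_6 ≡ 0` then `NCycle_4 ≡ 0`. -/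
theorem stmt4 {E : Type*} (Z : E → E → E → E → ℝ) :
    (∀ a b c d : E,
      ncyc Z 4 (ofT ![a,b,c,d])
        = ncyc Z 5 (ofT ![a,b,c,d,a]) + ncyc Z 5 (ofT ![a,b,c,c,d])
          - ncyc Z 6 (ofT ![a,b,c,c,d,a]))
    ∧ ((∀ x : ℕ → E, ncyc Z 5 x = 0) → (∀ x : ℕ → E, ncyc Z 6 x = 0) →
        ∀ x : ℕ → E, ncyc Z 4 x = 0) := by
  refine ⟨ncyc_four_eq_ncyc_five_add_ncyc_five_sub_ncyc_six Z, fun h5 h6 x => ?_⟩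
  rw [ncyc_four_eq_ncyc_four_ofT, ncyc_four_eq_ncyc_five_add_ncyc_five_sub_ncyc_six,
    h5, h5, h6, add_zero, sub_zero]
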